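/- arXiv:1201.5740 — 6 statements merged into one kernel-verified Lean document; each statement's English description precedes it below -/
import Mathlib

section
/- For every integer N ≥ 2, the function m ↦ Λ(m,N) is strictly decreasing on (0,∞). -/
/-! With `s = √(m(m+2))` and `u = 1/(m+1)`, one computes
`∂Λ/∂m = (2/π)(N−1)(m+1)(2/s − 1/s³ − 2 arcsin u)` and `2/s − 1/s³ = (2u − 3u³)/(1−u²)^{3/2}`.
So it suffices that `g(u) = 2 arcsin u − (2u − 3u³)/(1−u²)^{3/2}` is positive on `(0,1)`,
which holds because `g(0) = 0` and `g'(u) = u²(1+2u²)/(1−u²)^{5/2} > 0`. -/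

/-- `Λ(m,N) = (2/π)·(N−1)·(m+1)²·[1/√(m(m+2)) − arcsin(1/(m+1))]`. -/
noncomputable def Lam (m : ℝ) (N : ℕ) : ℝ :=
  (2 / Real.pi) * ((N : ℝ) - 1) * (m + 1) ^ 2 *
    (1 / Real.sqrt (m * (m + 2)) - Real.arcsin (1 / (m + 1)))

open Real Set

noncomputable def arcsinDefect (u : ℝ) : ℝ :=
  2 * arcsin u - (2 * u - 3 * u ^ 3) / √(1 - u ^ 2) ^ 3

lemma hasDerivAt_arcsinDefect {u : ℝ} (h₁ : -1 < u) (h₂ : u < 1) :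
    HasDerivAt arcsinDefect (u ^ 2 * (1 + 2 * u ^ 2) / √(1 - u ^ 2) ^ 5) u := by
  have hu : 0 < 1 - u ^ 2 := by nlinarith
  set p := √(1 - u ^ 2)
  have hp₀ : 0 < p := sqrt_pos.2 hu
  have hp₂ : p ^ 2 = 1 - u ^ 2 := sq_sqrt hu.le
  have hsqrt : HasDerivAt (fun x => √(1 - x ^ 2)) (-u / p) u := by
    refine (((hasDerivAt_pow 2 u).const_sub 1).sqrt hu.ne').congr_deriv ?_
    field_simp
    ring
  have hnum : HasDerivAt (fun x : ℝ => 2 * x - 3 * x ^ 3) (2 - 9 * u ^ 2) u := by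
    refine (((hasDerivAt_id' u).const_mul 2).fun_sub
      ((hasDerivAt_pow 3 u).const_mul 3)).congr_deriv ?_
    push_cast
    ring
  refine (((hasDerivAt_arcsin h₁.ne' h₂.ne).const_mul 2).fun_sub
    (hnum.fun_div (hsqrt.fun_pow 3) (pow_ne_zero 3 hp₀.ne'))).congr_deriv ?_
  field_simp
  linear_combination (2 * p ^ 8 + 7 * u ^ 2 * p ^ 6) * hp₂

lemma arcsinDefect_pos {u : ℝ} (h₀ : 0 < u) (h₁ : u < 1) : 0 < arcsinDefect u := by
  have hderiv : ∀ x ∈ Ico (0 : ℝ) 1,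
      HasDerivAt arcsinDefect (x ^ 2 * (1 + 2 * x ^ 2) / √(1 - x ^ 2) ^ 5) x :=
    fun x hx => hasDerivAt_arcsinDefect (by linarith [hx.1]) hx.2
  have hmono : StrictMonoOn arcsinDefect (Ico 0 1) := by
    refine strictMonoOn_of_hasDerivWithinAt_pos (convex_Ico 0 1)
      (f' := fun x => x ^ 2 * (1 + 2 * x ^ 2) / √(1 - x ^ 2) ^ 5)
      (fun x hx => (hderiv x hx).continuousAt.continuousWithinAt) (fun x hx => ?_) (fun x hx => ?_)
    · exact (hderiv x (interior_subset hx)).hasDerivWithinAt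
    · rw [interior_Ico] at hx
      have hp : 0 < √(1 - x ^ 2) := sqrt_pos.2 (by nlinarith [hx.1, hx.2])
      have := hx.1
      positivity
  simpa [arcsinDefect] using hmono ⟨le_rfl, one_pos⟩ ⟨h₀.le, h₁⟩ h₀

lemma sqrt_one_sub_one_div_add_one_sq {m : ℝ} (hm : 0 < m + 1) :
    √(1 - (1 / (m + 1)) ^ 2) = √(m * (m + 2)) / (m + 1) := by
  have h : 1 - (1 / (m + 1)) ^ 2 = m * (m + 2) / (m + 1) ^ 2 := by
    field_simp
    ring
  rw [h, sqrt_div' _ (by positivity), sqrt_sq hm.le]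

lemma two_div_sub_one_div_pow_three_lt {m : ℝ} (hm : 0 < m) :
    2 / √(m * (m + 2)) - 1 / √(m * (m + 2)) ^ 3 < 2 * arcsin (1 / (m + 1)) := by
  have hm₁ : 0 < m + 1 := by linarith
  have hq : 0 < m * (m + 2) := by positivity
  have hs : 0 < √(m * (m + 2)) := sqrt_pos.2 hq
  have hs₂ : √(m * (m + 2)) ^ 2 = m * (m + 2) := sq_sqrt hq.le
  have h := arcsinDefect_pos (u := 1 / (m + 1)) (by positivity) (by rw [div_lt_one hm₁]; linarith)
  rw [arcsinDefect, sqrt_one_sub_one_div_add_one_sq hm₁, sub_pos] at h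
  convert h using 1
  field_simp
  rw [hs₂]
  ring

lemma hasDerivAt_sqrt_mul_add_two {m : ℝ} (hm : m * (m + 2) ≠ 0) :
    HasDerivAt (fun x => √(x * (x + 2))) ((m + 1) / √(m * (m + 2))) m := by
  refine (((hasDerivAt_id' m).fun_mul ((hasDerivAt_id' m).add_const 2)).sqrt hm).congr_deriv ?_
  field_simp
  ring

lemma hasDerivAt_arcsin_one_div_add_one {m : ℝ} (hm : 0 < m) :
    HasDerivAt (fun x => arcsin (1 / (x + 1))) (-1 / ((m + 1) * √(m * (m + 2)))) m := by
  have hm₁ : 0 < m + 1 := by linarith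
  have hu₀ : 0 < 1 / (m + 1) := by positivity
  have hu₁ : 1 / (m + 1) < 1 := by rw [div_lt_one hm₁]; linarith
  have hinv : HasDerivAt (fun x : ℝ => 1 / (x + 1)) (-1 / (m + 1) ^ 2) m := by
    refine ((hasDerivAt_const m 1).fun_div ((hasDerivAt_id' m).add_const 1) hm₁.ne').congr_deriv ?_
    ring
  refine ((hasDerivAt_arcsin (by linarith) hu₁.ne).comp m hinv).congr_deriv ?_
  rw [sqrt_one_sub_one_div_add_one_sq hm₁]
  field_simp

lemma hasDerivAt_Lam (N : ℕ) {m : ℝ} (hm : 0 < m) :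
    HasDerivAt (fun x => Lam x N)
      (2 / π * (N - 1) * ((m + 1) *
        (2 / √(m * (m + 2)) - 1 / √(m * (m + 2)) ^ 3 - 2 * arcsin (1 / (m + 1))))) m := by
  have hq : 0 < m * (m + 2) := by positivity
  have hs : 0 < √(m * (m + 2)) := sqrt_pos.2 hq
  have hs₂ : √(m * (m + 2)) ^ 2 = m * (m + 2) := sq_sqrt hq.le
  have hfactor := (((hasDerivAt_id' m).add_const 1).fun_pow 2).const_mul (2 / π * (N - 1))
  have hbracket := ((hasDerivAt_const m 1).fun_div (hasDerivAt_sqrt_mul_add_two hq.ne')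
    hs.ne').fun_sub (hasDerivAt_arcsin_one_div_add_one hm)
  refine (hfactor.fun_mul hbracket).congr_deriv ?_
  field_simp
  linear_combination (N - 1 : ℝ) * (m + 1) * hs₂

/-- For every integer `N ≥ 2`, the function `m ↦ Λ(m,N)` is strictly decreasing on `(0,∞)`. -/
theorem stmt0 (N : ℕ) (hN : 2 ≤ N) :
    StrictAntiOn (fun m : ℝ => Lam m N) (Set.Ioi 0) := by
  have hc : 0 < 2 / π * ((N : ℝ) - 1) := by
    have : (2 : ℝ) ≤ N := by exact_mod_cast hN
    have := pi_pos
    exact mul_pos (by positivity) (by linarith)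
  refine strictAntiOn_of_deriv_neg (convex_Ioi 0)
    (fun m hm => (hasDerivAt_Lam N hm).continuousAt.continuousWithinAt) (fun m hm => ?_)
  rw [interior_Ioi] at hm
  rw [(hasDerivAt_Lam N hm).deriv]
  have := two_div_sub_one_div_pow_three_lt hm
  exact mul_neg_of_pos_of_neg hc (mul_neg_of_pos_of_neg (by linarith [hm.out]) (by linarith))
end

section
/- For every integer N ≥ 2, there exists a unique m > 0 such that Λ(m,N) = 1 (this unique root is denoted m*(N)); moreover, for m > 0, Λ(m,N) < 1 if and only if m > m*(N). -/
open Real Set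

lemma two_mul_sub_arctan_lt_pow_three {u : ℝ} (hu : 0 < u) : 2 * (u - arctan u) < u ^ 3 := by
  let f : ℝ → ℝ := fun u ↦ u ^ 3 - 2 * u + 2 * arctan u
  have hf : ∀ u, HasDerivAt f (3 * u ^ 2 - 2 + 2 * (1 / (1 + u ^ 2))) u := fun u ↦ by
    refine (((hasDerivAt_pow 3 u).sub ((hasDerivAt_id' u).const_mul 2)).add
      ((hasDerivAt_arctan u).const_mul 2)).congr_deriv ?_
    norm_num
  have hmono : StrictMonoOn f (Ici 0) := by
    refine strictMonoOn_of_deriv_pos (convex_Ici 0)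
      (fun u _ ↦ (hf u).continuousAt.continuousWithinAt) fun u hu ↦ ?_
    rw [interior_Ici, mem_Ioi] at hu
    rw [(hf u).deriv, show 3 * u ^ 2 - 2 + 2 * (1 / (1 + u ^ 2))
      = u ^ 2 * (3 * u ^ 2 + 1) / (1 + u ^ 2) by field_simp; ring]
    positivity
  have h : f 0 < f u := hmono self_mem_Ici hu.le hu
  simp only [f, arctan_zero] at h
  linarith

noncomputable def lamReduced (u : ℝ) : ℝ := (1 + u ^ 2) * (u - arctan u) / u ^ 2

lemma hasDerivAt_lamReduced {u : ℝ} (hu : u ≠ 0) :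
    HasDerivAt lamReduced (1 - 2 * (u - arctan u) / u ^ 3) u := by
  have h := (((hasDerivAt_pow 2 u).const_add 1).mul ((hasDerivAt_id u).sub
    (hasDerivAt_arctan u))).div (hasDerivAt_pow 2 u) (pow_ne_zero 2 hu)
  refine h.congr_deriv ?_
  simp only [Pi.mul_apply, Pi.sub_apply, id]
  field_simp
  ring

lemma lamReduced_strictMonoOn : StrictMonoOn lamReduced (Ioi 0) := by
  refine strictMonoOn_of_deriv_pos (convex_Ioi 0)
    (fun u hu ↦ (hasDerivAt_lamReduced (ne_of_gt hu)).continuousAt.continuousWithinAt)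
    fun u hu ↦ ?_
  rw [interior_Ioi, mem_Ioi] at hu
  rw [(hasDerivAt_lamReduced hu.ne').deriv, sub_pos, div_lt_one (by positivity)]
  exact two_mul_sub_arctan_lt_pow_three hu

lemma lamReduced_lt_mul_div_two {u : ℝ} (hu : 0 < u) : lamReduced u < (1 + u ^ 2) * u / 2 := by
  rw [lamReduced, div_lt_div_iff₀ (by positivity) two_pos]
  nlinarith [two_mul_sub_arctan_lt_pow_three hu,
    mul_pos (by positivity : (0 : ℝ) < 1 + u ^ 2) (pow_pos hu 3)]

lemma arctan_lt_self {u : ℝ} (hu : 0 < u) : arctan u < u := by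
  simpa [tan_arctan] using lt_tan (arctan_pos.2 hu) (arctan_lt_pi_div_two u)

lemma sub_pi_div_two_lt_lamReduced {u : ℝ} (hu : 0 < u) : u - π / 2 < lamReduced u := by
  have := arctan_lt_pi_div_two u
  have := arctan_lt_self hu
  rw [lamReduced, lt_div_iff₀ (by positivity)]
  nlinarith

lemma arcsin_one_div_add_one_eq_arctan {m : ℝ} (hm : 0 < m) :
    arcsin (1 / (m + 1)) = arctan (1 / √(m * (m + 2))) := by
  rw [arcsin_eq_arctan]
  · congr 1
    rw [show 1 - (1 / (m + 1)) ^ 2 = m * (m + 2) / (m + 1) ^ 2 by field_simp; ring,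
      sqrt_div' _ (by positivity), sqrt_sq (by positivity)]
    field_simp
  · constructor
    · have : 0 < 1 / (m + 1) := by positivity
      linarith
    · rw [div_lt_one (by positivity)]; linarith

lemma Lam_eq_lamReduced (N : ℕ) {m : ℝ} (hm : 0 < m) :
    Lam m N = 2 / π * (N - 1) * lamReduced (1 / √(m * (m + 2))) := by
  have hsq : √(m * (m + 2)) ^ 2 = m * (m + 2) := sq_sqrt (by positivity)
  rw [Lam, arcsin_one_div_add_one_eq_arctan hm, lamReduced]
  field_simp
  rw [hsq]
  ring

lemma one_div_sqrt_mul_add_two_strictAntiOn :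
    StrictAntiOn (fun m : ℝ ↦ 1 / √(m * (m + 2))) (Ioi 0) := by
  intro x (hx : 0 < x) y _ hxy
  apply one_div_lt_one_div_of_lt (by positivity)
  exact sqrt_lt_sqrt (by positivity) (by nlinarith)

lemma Lam_strictAntiOn {N : ℕ} (hN : 1 < N) : StrictAntiOn (Lam · N) (Ioi 0) := by
  intro x (hx : 0 < x) y (hy : 0 < y) hxy
  have hN' : (1 : ℝ) < N := by exact_mod_cast hN
  simp only [Lam_eq_lamReduced N hx, Lam_eq_lamReduced N hy]
  refine mul_lt_mul_of_pos_left ?_ (by positivity)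
  exact lamReduced_strictMonoOn (show (0 : ℝ) < 1 / √(y * (y + 2)) by positivity)
    (show (0 : ℝ) < 1 / √(x * (x + 2)) by positivity)
    (one_div_sqrt_mul_add_two_strictAntiOn hx hy hxy)

lemma Lam_continuousOn (N : ℕ) : ContinuousOn (Lam · N) (Ioi 0) := by
  intro m (hm : 0 < m)
  apply ContinuousAt.continuousWithinAt
  have : √(m * (m + 2)) ≠ 0 := by positivity
  have : m + 1 ≠ 0 := by positivity
  unfold Lam
  fun_prop (disch := assumption)

lemma one_lt_Lam {N : ℕ} (hN : 2 ≤ N) : 1 < Lam (1 / 100) N := by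
  have hN' : (2 : ℝ) ≤ N := by exact_mod_cast hN
  have hu : 4 ≤ 1 / √(1 / 100 * (1 / 100 + 2)) := by
    rw [le_one_div (by norm_num) (by positivity), sqrt_le_left (by norm_num)]
    norm_num
  have hK := sub_pi_div_two_lt_lamReduced
    (by linarith : (0 : ℝ) < 1 / √(1 / 100 * (1 / 100 + 2)))
  have := pi_lt_four
  have hC : 0 < 2 / π * (N - 1) := mul_pos (by positivity) (by linarith)
  rw [Lam_eq_lamReduced N (by norm_num)]
  calc (1 : ℝ) ≤ 2 / π * (N - 1) * (π / 2) := by field_simp; linarith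
    _ < _ := mul_lt_mul_of_pos_left (by linarith) hC

lemma Lam_self_lt_one {N : ℕ} (hN : 1 ≤ N) : Lam N N < 1 := by
  have hN' : (1 : ℝ) ≤ N := by exact_mod_cast hN
  set u := 1 / √((N : ℝ) * (N + 2)) with hu_def
  have hu : 0 < u := by positivity
  have huN : u ≤ 1 / N := by
    rw [hu_def]
    gcongr
    exact le_sqrt_of_sq_le (by nlinarith)
  have hu1 : u ≤ 1 := huN.trans (div_le_one_of_le₀ hN' (by positivity))
  have hK : lamReduced u ≤ 1 / N := by nlinarith [lamReduced_lt_mul_div_two hu]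
  have := pi_gt_three
  have hC : 0 ≤ 2 / π * (N - 1) := mul_nonneg (by positivity) (by linarith)
  rw [Lam_eq_lamReduced N (by positivity), ← hu_def]
  calc 2 / π * (N - 1) * lamReduced u ≤ 2 / π * (N - 1) * (1 / N) :=
        mul_le_mul_of_nonneg_left hK hC
    _ < 1 := by
        rw [div_mul_eq_mul_div, mul_one_div, div_div, div_lt_one (by positivity)]
        nlinarith

/-- For every integer `N ≥ 2`, there exists a unique `m > 0` with `Λ(m,N) = 1`
(denoted `m*(N)`); moreover, for `m > 0`, `Λ(m,N) < 1` if and only if `m > m*(N)`. -/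
theorem stmt2 (N : ℕ) (hN : 2 ≤ N) :
    (∃! m : ℝ, 0 < m ∧ Lam m N = 1) ∧
    (∀ mstar : ℝ, 0 < mstar → Lam mstar N = 1 →
      ∀ m : ℝ, 0 < m → (Lam m N < 1 ↔ mstar < m)) := by
  have hanti := Lam_strictAntiOn hN
  have hle : (1 / 100 : ℝ) ≤ N := by
    have : (2 : ℝ) ≤ N := by exact_mod_cast hN
    linarith
  obtain ⟨m, hm, hm1⟩ : ∃ m ∈ Icc (1 / 100 : ℝ) N, Lam m N = 1 :=
    intermediate_value_Icc' hle
      ((Lam_continuousOn N).mono fun x hx ↦ lt_of_lt_of_le (by norm_num) hx.1)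
      ⟨(Lam_self_lt_one (by omega)).le, (one_lt_Lam hN).le⟩
  have hm0 : 0 < m := lt_of_lt_of_le (by norm_num) hm.1
  refine ⟨⟨m, ⟨hm0, hm1⟩, fun y hy ↦ hanti.injOn hy.1 hm0 (hy.2.trans hm1.symm)⟩, ?_⟩
  intro mstar hmstar hmstar1 x hx
  rw [← hmstar1]
  exact hanti.lt_iff_gt hx hmstar
end

section
/- Let N ≥ 2 be an integer, m > 0, and set θ := arctan(√(1+2/m)), so that θ ∈ (π/4, π/2). Then Λ(m,N) = 1 if and only if cot(2θ) + 2θ − (π/2)·(1 − cos²(2θ)/(N−1)) = 0. -/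
open Real

lemma Real.cos_two_mul_arctan (x : ℝ) : cos (2 * arctan x) = (1 - x ^ 2) / (1 + x ^ 2) := by
  rw [cos_two_mul, cos_sq_arctan]
  field_simp
  ring

lemma two_mul_arctan_sqrt_one_add_two_div {m : ℝ} (hm : 0 < m) :
    2 * arctan √(1 + 2 / m) = arcsin (1 / (m + 1)) + π / 2 := by
  have hcos : cos (2 * arctan √(1 + 2 / m)) = -(1 / (m + 1)) := by
    rw [cos_two_mul_arctan, sq_sqrt (by positivity)]
    field_simp
    ring
  have h0 : 0 ≤ 2 * arctan √(1 + 2 / m) := by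
    have := arctan_nonneg.mpr (sqrt_nonneg (1 + 2 / m))
    positivity
  have hπ : 2 * arctan √(1 + 2 / m) ≤ π := by
    linarith [arctan_lt_pi_div_two √(1 + 2 / m)]
  calc 2 * arctan √(1 + 2 / m) = arccos (-(1 / (m + 1))) := by rw [← hcos, arccos_cos h0 hπ]
    _ = arcsin (1 / (m + 1)) + π / 2 := by
      rw [arccos_neg, arccos_eq_pi_div_two_sub_arcsin]
      ring

lemma tan_arcsin_one_div_add_one {m : ℝ} (hm : 0 < m) :
    tan (arcsin (1 / (m + 1))) = 1 / √(m * (m + 2)) := by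
  have hm1 : 0 < m + 1 := by linarith
  rw [tan_arcsin, show 1 - (1 / (m + 1)) ^ 2 = m * (m + 2) / (m + 1) ^ 2 by field_simp; ring,
    sqrt_div' _ (sq_nonneg _), sqrt_sq hm1.le]
  field_simp

lemma cos_div_sin_add_pi_div_two_relation_iff {K α : ℝ} (hK : K ≠ 0) (hα : sin α ≠ 0) :
    cos (α + π / 2) / sin (α + π / 2) + (α + π / 2) - π / 2 * (1 - cos (α + π / 2) ^ 2 / K) = 0
      ↔ 2 / π * K / sin α ^ 2 * (tan α - α) = 1 := by
  rw [cos_add_pi_div_two, sin_add_pi_div_two, neg_div, ← tan_eq_sin_div_cos]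
  have hfactor : π * sin α ^ 2 / (2 * K) ≠ 0 := by simp [hK, hα, pi_ne_zero]
  rw [show -tan α + (α + π / 2) - π / 2 * (1 - (-sin α) ^ 2 / K)
      = π * sin α ^ 2 / (2 * K) * (1 - 2 / π * K / sin α ^ 2 * (tan α - α)) by
    field_simp; ring, mul_eq_zero, sub_eq_zero]
  exact (or_iff_right hfactor).trans eq_comm

/-- Let `N ≥ 2`, `m > 0` and `θ := arctan √(1+2/m)`.  Then `θ ∈ (π/4, π/2)` and
`Λ(m,N) = 1` iff `cot(2θ) + 2θ − (π/2)(1 − cos²(2θ)/(N−1)) = 0`. -/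
theorem stmt3 (N : ℕ) (hN : 2 ≤ N) (m : ℝ) (hm : 0 < m)
    (θ : ℝ) (hθ : θ = Real.arctan (Real.sqrt (1 + 2 / m))) :
    θ ∈ Set.Ioo (Real.pi / 4) (Real.pi / 2) ∧
    (Lam m N = 1 ↔
      Real.cos (2 * θ) / Real.sin (2 * θ) + 2 * θ
        - (Real.pi / 2) * (1 - Real.cos (2 * θ) ^ 2 / ((N : ℝ) - 1)) = 0) := by
  set α := arcsin (1 / (m + 1)) with hα
  have h2θ : 2 * θ = α + π / 2 := hθ ▸ two_mul_arctan_sqrt_one_add_two_div hm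
  have hx_pos : 0 < 1 / (m + 1) := by positivity
  have hx_lt : 1 / (m + 1) < 1 := by rw [div_lt_one (by linarith)]; linarith
  have hα_pos : 0 < α := arcsin_pos.mpr hx_pos
  have hα_lt : α < π / 2 := arcsin_lt_pi_div_two.mpr hx_lt
  refine ⟨⟨by linarith, by linarith⟩, ?_⟩
  have hsin : sin α = 1 / (m + 1) := sin_arcsin (by linarith) hx_lt.le
  have hK : (N : ℝ) - 1 ≠ 0 := by
    have : (2 : ℝ) ≤ N := by exact_mod_cast hN
    linarith
  have hLam : Lam m N = 2 / π * ((N : ℝ) - 1) / sin α ^ 2 * (tan α - α) := by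
    rw [hsin, hα, tan_arcsin_one_div_add_one hm, Lam]
    field_simp
  rw [h2θ, hLam, cos_div_sin_add_pi_div_two_relation_iff hK (by rw [hsin]; positivity)]
end

section
/- Let m > 0 and k ≥ 0. There exist sequences (aₙ)_{n≥0} and (bₙ)_{n≥0} of nonnegative real numbers such that for every y ∈ [−1, 1] the series ∑_{n≥0} aₙ yⁿ and ∑_{n≥0} bₙ yⁿ converge absolutely and sinh(k·arcsin(y/(m+1)))/√(1 − (y/(m+1))²) = ∑_{n≥0} aₙ yⁿ, cosh(k·arcsin(y/(m+1)))/√(1 − (y/(m+1))²) = ∑_{n≥0} bₙ yⁿ. -/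
/-!
Let `F(x) = ∑ aₙ xⁿ`, where `a₀ = α`, `a₁ = kβ` and
`aₙ₊₂ = ((n+1)² + k²) / ((n+1)(n+2)) · aₙ`, and let `G` be the series with `G(0) = β`, `G' = kF`.
The ratio `aₙ₊₂ / aₙ` is at most `1` once `n + 1 ≥ k²`, so the coefficients are bounded and both
series converge on `(-1, 1)`; the recurrence is the coefficient form of `(1 - x²) F' = x F + k G`.
In the variable `t = arcsin x` the functions `f(t) = F(sin t) cos t` and `g(t) = G(sin t)` then
satisfy `f' = k g`, `g' = k f`, so `f ± g` are multiples of `e^{± k t}` and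
`f(t) = α cosh (k t) + β sinh (k t)`. For `k, α, β ≥ 0` the recurrence keeps the coefficients
nonnegative; the theorem is the case `(α, β) = (0, 1)`, resp. `(1, 0)`, at `x = y / (m + 1)`.
-/

open Real Set

theorem bddAbove_range_of_add_two_le {α : Type*} [Preorder α] [IsDirectedOrder α] [Nonempty α]
    {a : ℕ → α} (N : ℕ) (h : ∀ n ≥ N, a (n + 2) ≤ a n) : BddAbove (range a) := by
  obtain ⟨M, hM⟩ := ((Finset.range (N + 2)).finite_toSet.image a).bddAbove
  refine ⟨M, forall_mem_range.2 fun n => ?_⟩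
  induction n using Nat.strong_induction_on with
  | _ n ih =>
    rcases lt_or_ge n (N + 2) with hn | hn
    · exact hM (mem_image_of_mem a (by simpa using hn))
    · obtain ⟨n, rfl⟩ : ∃ m, n = m + 2 := ⟨n - 2, by omega⟩
      exact (h n (by omega)).trans (ih n (by omega))

section LinearODE

variable {s : Set ℝ} {t : ℝ}

theorem eq_mul_exp_of_hasDerivAt {u : ℝ → ℝ} {c : ℝ} (hs : IsOpen s) (hs' : IsPreconnected s)
    (h0 : 0 ∈ s) (hu : ∀ t ∈ s, HasDerivAt u (c * u t) t) (ht : t ∈ s) :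
    u t = u 0 * exp (c * t) := by
  have hv : ∀ t ∈ s, HasDerivAt (fun t => u t * exp (-(c * t))) 0 t := fun t ht => by
    have he : HasDerivAt (fun t => exp (-(c * t))) (exp (-(c * t)) * -c) t := by
      simpa using ((hasDerivAt_id t).const_mul c).neg.exp
    exact ((hu t ht).mul he).congr_deriv (by ring)
  have := hs.is_const_of_deriv_eq_zero hs'
    (fun t ht => (hv t ht).differentiableAt.differentiableWithinAt) (fun t ht => (hv t ht).deriv)
    ht h0
  simp only [mul_zero, neg_zero, exp_zero, mul_one] at this
  rw [← this, mul_assoc, ← exp_add, neg_add_cancel, exp_zero, mul_one]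

theorem eq_mul_cosh_add_mul_sinh {f g : ℝ → ℝ} {k : ℝ} (hs : IsOpen s) (hs' : IsPreconnected s)
    (h0 : 0 ∈ s) (hf : ∀ t ∈ s, HasDerivAt f (k * g t) t) (hg : ∀ t ∈ s, HasDerivAt g (k * f t) t)
    (ht : t ∈ s) : f t = f 0 * cosh (k * t) + g 0 * sinh (k * t) := by
  have hplus := eq_mul_exp_of_hasDerivAt (u := f + g) (c := k) hs hs' h0
    (fun t ht => ((hf t ht).add (hg t ht)).congr_deriv (by simp only [Pi.add_apply]; ring)) ht
  have hminus := eq_mul_exp_of_hasDerivAt (u := f - g) (c := -k) hs hs' h0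
    (fun t ht => ((hf t ht).sub (hg t ht)).congr_deriv (by simp only [Pi.sub_apply]; ring)) ht
  simp only [Pi.add_apply, Pi.sub_apply, neg_mul] at hplus hminus
  rw [cosh_eq, sinh_eq]
  linear_combination (hplus + hminus) / 2

end LinearODE

section PowerSeries

variable {c : ℕ → ℝ} {M x : ℝ}

theorem summable_succ_mul_pow {r : ℝ} (hr₀ : 0 ≤ r) (hr : r < 1) :
    Summable fun n : ℕ => ((n : ℝ) + 1) * r ^ n := by
  have hr' : ‖r‖ < 1 := by rwa [Real.norm_of_nonneg hr₀]
  refine ((summable_pow_mul_geometric_of_norm_lt_one 1 hr').add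
    (summable_geometric_of_lt_one hr₀ hr)).congr fun n => ?_
  ring

theorem summable_mul_pow_of_abs_le (hc : ∀ n, |c n| ≤ M) (hx : |x| < 1) :
    Summable fun n => c n * x ^ n :=
  .of_norm_bounded ((summable_geometric_of_lt_one (abs_nonneg x) hx).mul_left M) fun n => by
    rw [norm_mul, norm_pow, Real.norm_eq_abs, Real.norm_eq_abs]
    exact mul_le_mul_of_nonneg_right (hc n) (by positivity)

theorem summable_succ_mul_mul_pow_of_abs_le (hc : ∀ n, |c n| ≤ M) (hx : |x| < 1) :
    Summable fun n : ℕ => (n + 1) * c (n + 1) * x ^ n :=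
  .of_norm_bounded ((summable_succ_mul_pow (abs_nonneg x) hx).mul_left M) fun n => by
    rw [norm_mul, norm_mul, norm_pow, Real.norm_eq_abs, Real.norm_eq_abs, Real.norm_eq_abs,
      abs_of_nonneg (by positivity : (0 : ℝ) ≤ n + 1)]
    have := mul_le_mul_of_nonneg_left (hc (n + 1)) (by positivity : (0 : ℝ) ≤ (n + 1) * |x| ^ n)
    linarith

theorem hasDerivAt_tsum_mul_pow (hc : ∀ n, |c n| ≤ M) (hx : |x| < 1) :
    HasDerivAt (fun y => ∑' n, c n * y ^ n) (∑' n : ℕ, (n + 1) * c (n + 1) * x ^ n) x := by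
  obtain ⟨r, hxr, hr⟩ := exists_between hx
  have hr₀ : 0 < r := (abs_nonneg x).trans_lt hxr
  have hbound : ∀ y ∈ Ioo (-r) r, ∀ n : ℕ,
      ‖c n * (n * y ^ (n - 1))‖ ≤ M * (n * r ^ (n - 1)) := by
    intro y hy n
    rw [norm_mul, norm_mul, norm_pow, Real.norm_natCast, Real.norm_eq_abs, Real.norm_eq_abs]
    gcongr
    · exact (abs_nonneg _).trans (hc 0)
    · exact hc n
    · exact abs_le.2 ⟨hy.1.le, hy.2.le⟩
  have hu : Summable fun n : ℕ => M * (n * r ^ (n - 1)) := by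
    refine (summable_nat_add_iff 1).1 (((summable_succ_mul_pow hr₀.le hr).mul_left M).congr ?_)
    simp
  have hderiv := hasDerivAt_tsum_of_isPreconnected (g := fun n y => c n * y ^ n)
    (g' := fun n y => c n * (n * y ^ (n - 1))) hu isOpen_Ioo isPreconnected_Ioo
    (fun n y _ => (hasDerivAt_pow n y).const_mul (c n)) (fun n y hy => hbound y hy n)
    (y₀ := 0) ⟨neg_lt_zero.2 hr₀, hr₀⟩ (summable_mul_pow_of_abs_le hc (by simp)) (abs_lt.1 hxr)
  refine hderiv.congr_deriv ?_
  rw [tsum_eq_zero_add' ((summable_succ_mul_mul_pow_of_abs_le hc hx).congr fun n => ?_)]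
  · simp only [CharP.cast_eq_zero, zero_mul, mul_zero, zero_add, Nat.cast_add, Nat.cast_one,
      Nat.add_sub_cancel]
    exact tsum_congr fun n => by ring
  · simp only [Nat.cast_add, Nat.cast_one, Nat.add_sub_cancel]
    ring

end PowerSeries

theorem tsum_mul_zero_pow {R : Type*} [Semiring R] [TopologicalSpace R] [T2Space R] (c : ℕ → R) :
    ∑' n, c n * 0 ^ n = c 0 := by
  rw [tsum_eq_single 0 fun n hn => by simp [hn], pow_zero, mul_one]

theorem abs_sin_lt_one_of_mem_Ioo {t : ℝ} (ht : t ∈ Ioo (-(π / 2)) (π / 2)) : |sin t| < 1 :=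
  (sq_lt_one_iff_abs_lt_one _).1 (by nlinarith [sin_sq_add_cos_sq t, cos_pos_of_mem_Ioo ht])

namespace CoshSinhArcsin

/-- Taylor coefficients of `(α cosh (k arcsin x) + β sinh (k arcsin x)) / √(1 - x²)`; the recurrence
comes from the equation `(1 - x²) F'' - 3 x F' - (1 + k²) F = 0` satisfied by these functions. -/
noncomputable def coeff (k α β : ℝ) : ℕ → ℝ
  | 0 => α
  | 1 => k * β
  | n + 2 => ((n + 1) ^ 2 + k ^ 2) / ((n + 1) * (n + 2)) * coeff k α β n

/-- Taylor coefficients of `β cosh (k arcsin x) + α sinh (k arcsin x)`, whose derivative is `k`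
times the series of `coeff k α β`. -/
noncomputable def primitiveCoeff (k α β : ℝ) : ℕ → ℝ
  | 0 => β
  | n + 1 => k * coeff k α β n / (n + 1)

variable {k α β x : ℝ}

theorem coeff_nonneg (hk : 0 ≤ k) (hα : 0 ≤ α) (hβ : 0 ≤ β) : ∀ n, 0 ≤ coeff k α β n
  | 0 => hα
  | 1 => mul_nonneg hk hβ
  | n + 2 => mul_nonneg (by positivity) (coeff_nonneg hk hα hβ n)

theorem abs_coeff_add_two_le {n : ℕ} (hn : k ^ 2 ≤ n + 1) :
    |coeff k α β (n + 2)| ≤ |coeff k α β n| := by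
  rw [coeff, abs_mul, abs_of_nonneg (by positivity)]
  exact mul_le_of_le_one_left (abs_nonneg _) ((div_le_one (by positivity)).2 (by nlinarith))

theorem exists_abs_coeff_le : ∃ M, ∀ n, |coeff k α β n| ≤ M := by
  obtain ⟨N, hN⟩ := exists_nat_ge (k ^ 2)
  obtain ⟨M, hM⟩ := bddAbove_range_of_add_two_le (a := fun n => |coeff k α β n|) N
    fun n hn => abs_coeff_add_two_le (hN.trans (by exact_mod_cast hn.trans n.le_succ))
  exact ⟨M, fun n => hM (mem_range_self n)⟩

theorem exists_abs_primitiveCoeff_le : ∃ M, ∀ n, |primitiveCoeff k α β n| ≤ M := by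
  obtain ⟨M, hM⟩ := exists_abs_coeff_le (k := k) (α := α) (β := β)
  refine ⟨max |β| (|k| * M), fun n => ?_⟩
  cases n with
  | zero => exact le_max_left _ _
  | succ n =>
    rw [primitiveCoeff, abs_div, abs_mul, abs_of_pos (by positivity : (0 : ℝ) < n + 1)]
    refine le_max_of_le_right ((div_le_self (by positivity) (by simp)).trans ?_)
    exact mul_le_mul_of_nonneg_left (hM n) (abs_nonneg k)

theorem one_sub_sq_mul_tsum_deriv (hH : Summable fun n => coeff k α β n * x ^ n)
    (hQ : Summable fun n => primitiveCoeff k α β n * x ^ n)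
    (hD : Summable fun n : ℕ => (n + 1) * coeff k α β (n + 1) * x ^ n) :
    (1 - x ^ 2) * ∑' n : ℕ, (n + 1) * coeff k α β (n + 1) * x ^ n =
      x * ∑' n, coeff k α β n * x ^ n + k * ∑' n, primitiveCoeff k α β n * x ^ n := by
  set d := fun n : ℕ => ((n : ℝ) + 1) * coeff k α β (n + 1) * x ^ n
  have hrec : ∀ n : ℕ, d (n + 2) = x ^ 2 * d n + x * (coeff k α β (n + 1) * x ^ (n + 1)) +
      k * (primitiveCoeff k α β (n + 2) * x ^ (n + 2)) := by
    intro n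
    simp only [d, coeff, primitiveCoeff]
    push_cast
    field_simp
    ring
  have hsum := ((hD.hasSum.mul_left (x ^ 2)).add
    (((hasSum_nat_add_iff' 1).2 hH.hasSum).mul_left x)).add
    (((hasSum_nat_add_iff' 2).2 hQ.hasSum).mul_left k)
  simp only [← hrec] at hsum
  have := ((hasSum_nat_add_iff' 2).2 hD.hasSum).unique hsum
  simp only [d, Finset.sum_range_succ, Finset.sum_range_zero, coeff.eq_1, coeff.eq_2, coeff.eq_3,
    primitiveCoeff.eq_1, primitiveCoeff.eq_2] at this
  norm_num [coeff.eq_2] at this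
  linear_combination this

theorem hasDerivAt_tsum_primitiveCoeff_mul_pow (hx : |x| < 1) :
    HasDerivAt (fun y => ∑' n, primitiveCoeff k α β n * y ^ n)
      (k * ∑' n, coeff k α β n * x ^ n) x := by
  obtain ⟨M, hM⟩ := exists_abs_primitiveCoeff_le (k := k) (α := α) (β := β)
  refine (hasDerivAt_tsum_mul_pow hM hx).congr_deriv ?_
  rw [← tsum_mul_left]
  refine tsum_congr fun n => ?_
  rw [primitiveCoeff]
  field_simp

theorem hasDerivAt_tsum_coeff_mul_sin_pow_mul_cos {t : ℝ} (ht : t ∈ Ioo (-(π / 2)) (π / 2)) :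
    HasDerivAt (fun t => (∑' n, coeff k α β n * sin t ^ n) * cos t)
      (k * ∑' n, primitiveCoeff k α β n * sin t ^ n) t := by
  have hx := abs_sin_lt_one_of_mem_Ioo ht
  obtain ⟨M, hM⟩ := exists_abs_coeff_le (k := k) (α := α) (β := β)
  obtain ⟨M', hM'⟩ := exists_abs_primitiveCoeff_le (k := k) (α := α) (β := β)
  have hH := (hasDerivAt_tsum_mul_pow hM hx).comp t (hasDerivAt_sin t)
  refine (hH.mul (hasDerivAt_cos t)).congr_deriv ?_
  have hode := one_sub_sq_mul_tsum_deriv (summable_mul_pow_of_abs_le hM hx)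
    (summable_mul_pow_of_abs_le hM' hx) (summable_succ_mul_mul_pow_of_abs_le hM hx)
  simp only [Function.comp_apply]
  linear_combination
    hode + (∑' n : ℕ, (n + 1) * coeff k α β (n + 1) * sin t ^ n) * sin_sq_add_cos_sq t

theorem hasSum_coeff_mul_pow (hx : |x| < 1) :
    HasSum (fun n => coeff k α β n * x ^ n)
      ((α * cosh (k * arcsin x) + β * sinh (k * arcsin x)) / √(1 - x ^ 2)) := by
  obtain ⟨M, hM⟩ := exists_abs_coeff_le (k := k) (α := α) (β := β)
  convert (summable_mul_pow_of_abs_le hM hx).hasSum using 1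
  obtain ⟨hx₁, hx₂⟩ := abs_lt.1 hx
  have harcsin : arcsin x ∈ Ioo (-(π / 2)) (π / 2) :=
    ⟨neg_pi_div_two_lt_arcsin.2 hx₁, arcsin_lt_pi_div_two.2 hx₂⟩
  have hsol := eq_mul_cosh_add_mul_sinh
    (f := fun t => (∑' n, coeff k α β n * sin t ^ n) * cos t)
    (g := fun t => ∑' n, primitiveCoeff k α β n * sin t ^ n) isOpen_Ioo isPreconnected_Ioo
    (by constructor <;> linarith [pi_pos])
    (fun t ht => hasDerivAt_tsum_coeff_mul_sin_pow_mul_cos ht)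
    (fun t ht => ((hasDerivAt_tsum_primitiveCoeff_mul_pow (abs_sin_lt_one_of_mem_Ioo ht)).comp t
      (hasDerivAt_sin t)).congr_deriv (mul_assoc _ _ _)) harcsin
  have hsqrt : 0 < √(1 - x ^ 2) := sqrt_pos.2 (by nlinarith)
  simp only [sin_arcsin hx₁.le hx₂.le, cos_arcsin, sin_zero, cos_zero, mul_one, tsum_mul_zero_pow,
    coeff.eq_1, primitiveCoeff.eq_1] at hsol
  rw [div_eq_iff hsqrt.ne', hsol]

theorem hasSum_coeff_div_pow_mul_pow {ρ y : ℝ} (hy : |y| < ρ) :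
    HasSum (fun n => coeff k α β n / ρ ^ n * y ^ n)
      ((α * cosh (k * arcsin (y / ρ)) + β * sinh (k * arcsin (y / ρ))) / √(1 - (y / ρ) ^ 2)) := by
  have hρ : 0 < ρ := (abs_nonneg y).trans_lt hy
  have hx : |y / ρ| < 1 := by rwa [abs_div, abs_of_pos hρ, div_lt_one hρ]
  convert hasSum_coeff_mul_pow hx using 2 with n
  rw [div_pow]
  ring

end CoshSinhArcsin

open CoshSinhArcsin

/-- For `m > 0` and `k ≥ 0` there are sequences of nonnegative coefficients giving
absolutely convergent power-series expansions on `[−1,1]` of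
`sinh(k·arcsin(y/(m+1)))/√(1−(y/(m+1))²)` and `cosh(k·arcsin(y/(m+1)))/√(1−(y/(m+1))²)`. -/
theorem stmt12 (m k : ℝ) (hm : 0 < m) (hk : 0 ≤ k) :
    ∃ a b : ℕ → ℝ, (∀ n, 0 ≤ a n) ∧ (∀ n, 0 ≤ b n) ∧
      ∀ y ∈ Set.Icc (-1 : ℝ) 1,
        Summable (fun n : ℕ => a n * |y| ^ n) ∧
        Summable (fun n : ℕ => b n * |y| ^ n) ∧
        (∑' n : ℕ, a n * y ^ n) =
          Real.sinh (k * Real.arcsin (y / (m + 1))) / Real.sqrt (1 - (y / (m + 1)) ^ 2) ∧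
        (∑' n : ℕ, b n * y ^ n) =
          Real.cosh (k * Real.arcsin (y / (m + 1))) / Real.sqrt (1 - (y / (m + 1)) ^ 2) := by
  refine ⟨fun n => coeff k 0 1 n / (m + 1) ^ n, fun n => coeff k 1 0 n / (m + 1) ^ n,
    fun n => div_nonneg (coeff_nonneg hk le_rfl zero_le_one n) (by positivity),
    fun n => div_nonneg (coeff_nonneg hk zero_le_one le_rfl n) (by positivity), fun y hy => ?_⟩
  have hy : |y| < m + 1 := (abs_le.2 hy).trans_lt (by linarith)
  have hy' : |(|y|)| < m + 1 := by rwa [abs_abs]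
  refine ⟨(hasSum_coeff_div_pow_mul_pow hy').summable, (hasSum_coeff_div_pow_mul_pow hy').summable,
    ?_, ?_⟩
  · simp [(hasSum_coeff_div_pow_mul_pow hy).tsum_eq]
  · simp [(hasSum_coeff_div_pow_mul_pow hy).tsum_eq]
end

section
/- For real numbers 0 < a < b, the function k ↦ sinh(ak)/sinh(bk) is strictly decreasing on (0, ∞). -/
/-!
The logarithmic derivative of `k ↦ sinh (a k) / sinh (b k)` is `a coth (a k) - b coth (b k)`,
which equals `(φ (a k) - φ (b k)) / k` for `φ t = t coth t`.
Since `φ' t = (sinh t cosh t - t) / sinh² t` and `sinh t cosh t = sinh (2t) / 2 > t`,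
the function `φ` is strictly increasing on `(0, ∞)`, so the derivative is negative.
-/

open Real Set

namespace Real

lemma self_lt_sinh_mul_cosh {t : ℝ} (ht : 0 < t) : t < sinh t * cosh t := by
  have h := self_lt_sinh_iff.2 (by linarith : 0 < 2 * t)
  rw [sinh_two_mul] at h
  linarith

lemma strictMonoOn_mul_cosh_div_sinh :
    StrictMonoOn (fun t : ℝ => t * cosh t / sinh t) (Ioi 0) := by
  refine strictMonoOn_of_deriv_pos (convex_Ioi 0) ?_ fun t ht => ?_
  · exact ContinuousOn.div (by fun_prop) (by fun_prop) fun t ht => (sinh_pos_iff.2 ht).ne'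
  rw [interior_Ioi, mem_Ioi] at ht
  have hsinh : 0 < sinh t := sinh_pos_iff.2 ht
  have hderiv :=
    ((hasDerivAt_id' t).fun_mul (hasDerivAt_cosh t)).fun_div (hasDerivAt_sinh t) hsinh.ne'
  rw [hderiv.deriv]
  have hnum : (1 * cosh t + t * sinh t) * sinh t - t * cosh t * cosh t = sinh t * cosh t - t := by
    linear_combination (-t) * cosh_sq_sub_sinh_sq t
  rw [hnum]
  exact div_pos (sub_pos.2 (self_lt_sinh_mul_cosh ht)) (by positivity)

lemma mul_cosh_mul_sinh_lt {s t : ℝ} (hs : 0 < s) (hst : s < t) :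
    s * cosh s * sinh t < t * cosh t * sinh s := by
  have h := strictMonoOn_mul_cosh_div_sinh (mem_Ioi.2 hs) (mem_Ioi.2 (hs.trans hst)) hst
  rwa [div_lt_div_iff₀ (sinh_pos_iff.2 hs) (sinh_pos_iff.2 (hs.trans hst))] at h

end Real

/-- For `0 < a < b`, the function `k ↦ sinh(ak)/sinh(bk)` is strictly decreasing on `(0,∞)`. -/
theorem stmt14 (a b : ℝ) (ha : 0 < a) (hab : a < b) :
    StrictAntiOn (fun k : ℝ => Real.sinh (a * k) / Real.sinh (b * k)) (Set.Ioi 0) := by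
  have hb : 0 < b := ha.trans hab
  refine strictAntiOn_of_deriv_neg (convex_Ioi 0) ?_ fun k hk => ?_
  · exact ContinuousOn.div (by fun_prop) (by fun_prop)
      fun k hk => (sinh_pos_iff.2 (mul_pos hb hk)).ne'
  rw [interior_Ioi, mem_Ioi] at hk
  have hsinh_bk : 0 < sinh (b * k) := sinh_pos_iff.2 (mul_pos hb hk)
  have hderiv := (((hasDerivAt_id' k).const_mul a).sinh).fun_div
    (((hasDerivAt_id' k).const_mul b).sinh) hsinh_bk.ne'
  rw [hderiv.deriv]
  have key := mul_cosh_mul_sinh_lt (mul_pos ha hk) (mul_lt_mul_of_pos_right hab hk)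
  have hnum : cosh (a * k) * a * sinh (b * k) - sinh (a * k) * (cosh (b * k) * b) < 0 := by
    nlinarith
  simpa using div_neg_of_neg_of_pos hnum (by positivity)
end

section
/- For every m > 0, ∫₀^1 y·arcsin(y/(m+1))/√(1 − (y/(m+1))²) dy = (m+1)·(1 − √(m(m+2))·arcsin(1/(m+1))). -/
/-!
Substituting `u = y / (m + 1)` turns the integral into `(m + 1)² ∫₀^{1/(m+1)} u arcsin u / √(1 - u²) du`,
and `u - √(1 - u²) arcsin u` is an antiderivative of that integrand on `(-1, 1)`.
-/

open Real Set

lemma sq_lt_one_of_mem_uIcc_zero {b u : ℝ} (hb : |b| < 1) (hu : u ∈ uIcc 0 b) : u ^ 2 < 1 := by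
  have hu' : |u| ≤ |b| := by simpa using abs_sub_left_of_mem_uIcc hu
  nlinarith [sq_abs u, abs_nonneg u]

lemma hasDerivAt_sub_sqrt_mul_arcsin {u : ℝ} (hu : u ^ 2 < 1) :
    HasDerivAt (fun u => u - √(1 - u ^ 2) * arcsin u) (u * arcsin u / √(1 - u ^ 2)) u := by
  have hpos : 0 < 1 - u ^ 2 := by linarith
  have hne_neg_one : u ≠ -1 := by rintro rfl; norm_num at hu
  have hne_one : u ≠ 1 := by rintro rfl; norm_num at hu
  have hsqrt : HasDerivAt (fun u => √(1 - u ^ 2)) (-(2 * u) / (2 * √(1 - u ^ 2))) u := by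
    simpa using ((hasDerivAt_pow 2 u).const_sub 1).sqrt hpos.ne'
  refine ((hasDerivAt_id u).sub (hsqrt.mul (hasDerivAt_arcsin hne_neg_one hne_one))).congr_deriv ?_
  field_simp
  ring

lemma integral_mul_arcsin_div_sqrt {b : ℝ} (hb : |b| < 1) :
    ∫ u in (0 : ℝ)..b, u * arcsin u / √(1 - u ^ 2) = b - √(1 - b ^ 2) * arcsin b := by
  have hsq : ∀ u ∈ uIcc 0 b, u ^ 2 < 1 := fun u hu => sq_lt_one_of_mem_uIcc_zero hb hu
  have hcont : ContinuousOn (fun u => u * arcsin u / √(1 - u ^ 2)) (uIcc 0 b) := by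
    refine ContinuousOn.div (by fun_prop) (by fun_prop) fun u hu => ?_
    exact (sqrt_pos.2 (by linarith [hsq u hu])).ne'
  rw [intervalIntegral.integral_eq_sub_of_hasDerivAt
    (fun u hu => hasDerivAt_sub_sqrt_mul_arcsin (hsq u hu)) hcont.intervalIntegrable]
  simp

/-- `∫₀¹ y·arcsin(y/(m+1))/√(1−(y/(m+1))²) dy = (m+1)(1 − √(m(m+2))·arcsin(1/(m+1)))`. -/
theorem stmt15 (m : ℝ) (hm : 0 < m) :
    (∫ y in (0 : ℝ)..(1 : ℝ),
        y * Real.arcsin (y / (m + 1)) / Real.sqrt (1 - (y / (m + 1)) ^ 2)) =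
      (m + 1) * (1 - Real.sqrt (m * (m + 2)) * Real.arcsin (1 / (m + 1))) := by
  set a := m + 1
  have ha0 : 0 < a := by linarith
  have hb : |1 / a| < 1 := by
    rw [abs_of_pos (by positivity), div_lt_one ha0]; linarith
  have hsqrt : √(1 - (1 / a) ^ 2) = √(m * (m + 2)) / a := by
    rw [show 1 - (1 / a) ^ 2 = m * (m + 2) / a ^ 2 by field_simp; ring,
      sqrt_div (by positivity), sqrt_sq ha0.le]
  have hsubst : (fun y => y * arcsin (y / a) / √(1 - (y / a) ^ 2)) =
      fun y => a * ((y / a) * arcsin (y / a) / √(1 - (y / a) ^ 2)) := by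
    funext y; field_simp
  rw [hsubst, intervalIntegral.integral_const_mul,
    intervalIntegral.integral_comp_div (fun u => u * arcsin u / √(1 - u ^ 2)) ha0.ne',
    zero_div, integral_mul_arcsin_div_sqrt hb, hsqrt, smul_eq_mul]
  field_simp
end
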